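/- arXiv:1603.07199 — 3 statements merged into one kernel-verified Lean document; each statement's English description precedes it below -/
import Mathlib

section
/- In any ordered abelian semigroup W, for elements x, y: β(x, y) < 1 if and only if x <ₛ y, i.e., there exists k ∈ ℕ, k ≥ 1, with (k+1)x ≤ ky. -/
open scoped ENNReal

/-- Compact containment (way-below) relation: `a ≪ b` iff for every monotone sequence
with a supremum dominating `b`, some term dominates `a`. -/
def CuWayBelow {S : Type*} [Preorder S] (a b : S) : Prop :=
  ∀ c : ℕ → S, Monotone c → ∀ s : S, IsLUB (Set.range c) s → b ≤ s → ∃ n, a ≤ c n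

/-- The axioms (O1)-(O4) of the category Cu, together with positivity of the order. -/
structure CuSemigroup (S : Type*) [AddCommMonoid S] [PartialOrder S] [IsOrderedAddMonoid S] : Prop where
  pos : ∀ x : S, 0 ≤ x
  O1 : ∀ c : ℕ → S, Monotone c → ∃ s : S, IsLUB (Set.range c) s
  O2 : ∀ a : S, ∃ c : ℕ → S, (∀ n, CuWayBelow (c n) (c (n + 1))) ∧ IsLUB (Set.range c) a
  O3 : ∀ a' a b' b : S, CuWayBelow a' a → CuWayBelow b' b → CuWayBelow (a' + b') (a + b)
  O4 : ∀ c d : ℕ → S, Monotone c → Monotone d → ∀ s t : S,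
      IsLUB (Set.range c) s → IsLUB (Set.range d) t →
      IsLUB (Set.range fun n => c n + d n) (s + t)

/-- Simplicity: every nonzero element is full. -/
def CuSimple (S : Type*) [AddCommMonoid S] [PartialOrder S] [IsOrderedAddMonoid S] : Prop :=
  ∀ x y : S, x ≠ 0 → y ≠ 0 → ∀ y' : S, CuWayBelow y' y → ∃ n : ℕ, y' ≤ n • x

/-- A full sequence: increasing and absorbing every compactly contained element. -/
def CuFullSeq {S : Type*} [AddCommMonoid S] [PartialOrder S] [IsOrderedAddMonoid S] (x : ℕ → S) : Prop :=
  Monotone x ∧ ∀ z' z : S, CuWayBelow z' z → ∃ n m : ℕ, z' ≤ m • x n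

/-- The value `β(x,y) = inf { l/k : k ≥ 1, k•x ≤ l•y }`. -/
noncomputable def beta {W : Type*} [AddCommMonoid W] [PartialOrder W] [IsOrderedAddMonoid W] (x y : W) : ℝ :=
  sInf {r : ℝ | ∃ k l : ℕ, 0 < k ∧ k • x ≤ l • y ∧ r = (l : ℝ) / (k : ℝ)}

/-- ω-comparison. -/
def OmegaComparison (S : Type*) [AddCommMonoid S] [PartialOrder S] [IsOrderedAddMonoid S] : Prop :=
  ∀ (x' x : S) (y : ℕ → S), CuWayBelow x' x →
    (∀ j : ℕ, ∃ k : ℕ, 1 ≤ k ∧ (k + 1) • x ≤ k • y j) →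
    ∃ n : ℕ, x' ≤ ∑ j ∈ Finset.range n, y j

/-- β-comparison. -/
def BetaComparison (S : Type*) [AddCommMonoid S] [PartialOrder S] [IsOrderedAddMonoid S] : Prop :=
  ∀ x y : S, (∃ n : ℕ, x ≤ n • y) → beta x y = 0 → x ≤ y

section Beta

variable {W : Type*} [AddCommMonoid W] [PartialOrder W] [IsOrderedAddMonoid W] {x y : W}

theorem beta_le_of_nsmul_le {k l : ℕ} (hk : 0 < k) (h : k • x ≤ l • y) :
    beta x y ≤ (l : ℝ) / k :=
  csInf_le ⟨0, by rintro r ⟨k, l, -, -, rfl⟩; positivity⟩ ⟨k, l, hk, h, rfl⟩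

theorem le_beta_of_forall_nsmul_le {c : ℝ} (hprop : ∃ n : ℕ, x ≤ n • y)
    (h : ∀ k l : ℕ, 0 < k → k • x ≤ l • y → c ≤ (l : ℝ) / k) : c ≤ beta x y := by
  obtain ⟨n, hn⟩ := hprop
  refine le_csInf ⟨n, 1, n, one_pos, by simpa using hn, by simp⟩ ?_
  rintro r ⟨k, l, hk, hkl, rfl⟩
  exact h k l hk hkl

/-- Doubling `k • x ≤ l • y` makes room for the step `2 * k = (2 * k - 1) + 1` even when
`k = 1`. -/
theorem exists_succ_nsmul_le_nsmul_of_nsmul_le (hy : 0 ≤ y) {k l : ℕ} (hlk : l < k)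
    (h : k • x ≤ l • y) : ∃ m : ℕ, 1 ≤ m ∧ (m + 1) • x ≤ m • y := by
  refine ⟨2 * k - 1, by omega, ?_⟩
  calc (2 * k - 1 + 1) • x = 2 • k • x := by rw [← mul_nsmul']; congr 1; omega
    _ ≤ 2 • l • y := nsmul_le_nsmul_right h 2
    _ = (2 * l) • y := by rw [← mul_nsmul']
    _ ≤ (2 * k - 1) • y := nsmul_le_nsmul_left hy (by omega)

end Beta

/-- `β(x,y) < 1` iff `x <ₛ y`. -/
theorem stmt8 {W : Type*} [AddCommMonoid W] [PartialOrder W] [IsOrderedAddMonoid W] (hpos : ∀ x : W, 0 ≤ x)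
    (x y : W) (hprop : ∃ n : ℕ, x ≤ n • y) :
    beta x y < 1 ↔ ∃ k : ℕ, 1 ≤ k ∧ (k + 1) • x ≤ k • y := by
  constructor
  · contrapose!
    intro hc
    refine le_beta_of_forall_nsmul_le hprop fun k l hk hkl => ?_
    have hkl' : k ≤ l := not_lt.mp fun hlk =>
      let ⟨m, hm, hmle⟩ := exists_succ_nsmul_le_nsmul_of_nsmul_le (hpos y) hlk hkl
      hc m hm hmle
    rw [le_div_iff₀ (by exact_mod_cast hk), one_mul]
    exact_mod_cast hkl'
  · rintro ⟨k, -, hkl⟩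
    calc beta x y ≤ (k : ℝ) / ((k + 1 : ℕ) : ℝ) := beta_le_of_nsmul_le k.succ_pos hkl
      _ < 1 := by rw [div_lt_one (by positivity)]; push_cast; linarith
end

section
/- A Cu-semigroup S has ω-comparison if and only if it satisfies the following a priori weaker property: whenever x' ≪ x and (yⱼ) is a sequence with x <ₛ yⱼ and yⱼ ≪ ∞ for all j (where ∞ is a largest element of S, assumed to exist), then x' ≤ y₁ + ⋯ + yₙ for some n. -/
open scoped ENNReal

/-!
Given `x' ≪ x` and `x <ₛ yⱼ` for all `j`, interpolate `x' ≪ x'' ≪ x`. Then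
`(k+1)•x'' ≪ (k+1)•x ≤ k•yⱼ`, and since `k•yⱼ` is the supremum of `k•dᵢ` for a rapidly
increasing sequence `dᵢ ↑ yⱼ`, some `y'ⱼ := dᵢ ≪ yⱼ` already satisfies `x'' <ₛ y'ⱼ`.
The weaker property applied to `x' ≪ x''` and `(y'ⱼ)` bounds `x'` by `∑ y'ⱼ ≤ ∑ yⱼ`.
-/

section WayBelow

variable {S : Type*} [Preorder S] {a b c : S}

theorem CuWayBelow.le (h : CuWayBelow a b) : a ≤ b :=
  (h (fun _ => b) monotone_const b (by simp [Set.range_const]) le_rfl).choose_spec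

theorem cuWayBelow_of_le_of_cuWayBelow (hab : a ≤ b) (hbc : CuWayBelow b c) :
    CuWayBelow a c :=
  fun d hd s hs hcs => (hbc d hd s hs hcs).imp fun _ => hab.trans

theorem CuWayBelow.trans_le (hab : CuWayBelow a b) (hbc : b ≤ c) : CuWayBelow a c :=
  fun d hd s hs hcs => hab d hd s hs (hbc.trans hcs)

end WayBelow

namespace CuSemigroup

variable {S : Type*} [AddCommMonoid S] [PartialOrder S] [IsOrderedAddMonoid S]
  (hCu : CuSemigroup S)
include hCu

theorem cuWayBelow_zero (b : S) : CuWayBelow (0 : S) b :=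
  fun _ _ _ _ _ => ⟨0, hCu.pos _⟩

theorem nsmul_cuWayBelow_nsmul {a b : S} (h : CuWayBelow a b) (k : ℕ) :
    CuWayBelow (k • a) (k • b) := by
  induction k with
  | zero => simpa using hCu.cuWayBelow_zero 0
  | succ n ih =>
    rw [succ_nsmul, succ_nsmul]
    exact hCu.O3 _ _ _ _ ih h

theorem isLUB_nsmul {d : ℕ → S} (hd : Monotone d) {y : S} (hy : IsLUB (Set.range d) y)
    (k : ℕ) : IsLUB (Set.range fun n => k • d n) (k • y) := by
  induction k with
  | zero => simp [Set.range_const]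
  | succ n ih => simpa [succ_nsmul] using hCu.O4 _ d (hd.const_nsmul n) hd _ y ih hy

theorem exists_monotone_cuWayBelow_isLUB (a : S) :
    ∃ c : ℕ → S, Monotone c ∧ (∀ n, CuWayBelow (c n) (c (n + 1))) ∧
      (∀ n, CuWayBelow (c n) a) ∧ IsLUB (Set.range c) a := by
  obtain ⟨c, hc, hca⟩ := hCu.O2 a
  exact ⟨c, monotone_nat_of_le_succ fun n => (hc n).le, hc,
    fun n => (hc n).trans_le (hca.1 ⟨n + 1, rfl⟩), hca⟩

theorem exists_cuWayBelow_between {a b : S} (h : CuWayBelow a b) :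
    ∃ c, CuWayBelow a c ∧ CuWayBelow c b := by
  obtain ⟨c, hmono, hsucc, hcb, hlub⟩ := hCu.exists_monotone_cuWayBelow_isLUB b
  obtain ⟨m, hm⟩ := h c hmono b hlub le_rfl
  exact ⟨c (m + 1), cuWayBelow_of_le_of_cuWayBelow hm (hsucc m), hcb (m + 1)⟩

theorem exists_cuWayBelow_le_nsmul {a y : S} {k : ℕ} (h : CuWayBelow a (k • y)) :
    ∃ y', CuWayBelow y' y ∧ a ≤ k • y' := by
  obtain ⟨d, hmono, -, hdy, hlub⟩ := hCu.exists_monotone_cuWayBelow_isLUB y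
  obtain ⟨i, hi⟩ := h _ (hmono.const_nsmul k) _ (hCu.isLUB_nsmul hmono hlub k) le_rfl
  exact ⟨d i, hdy i, hi⟩

end CuSemigroup

/-- ω-comparison is equivalent to its a priori weaker version where all the `yⱼ` are
compactly contained in the largest element `∞`. -/
theorem stmt11 {S : Type*} [AddCommMonoid S] [PartialOrder S] [IsOrderedAddMonoid S] (hCu : CuSemigroup S)
    (infty : S) (htop : ∀ s : S, s ≤ infty) :
    OmegaComparison S ↔
      (∀ (x' x : S) (y : ℕ → S), CuWayBelow x' x →
        (∀ j : ℕ, ∃ k : ℕ, 1 ≤ k ∧ (k + 1) • x ≤ k • y j) →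
        (∀ j : ℕ, CuWayBelow (y j) infty) →
        ∃ n : ℕ, x' ≤ ∑ j ∈ Finset.range n, y j) := by
  refine ⟨fun h x' x y hx'x hy _ => h x' x y hx'x hy, fun h x' x y hx'x hy => ?_⟩
  obtain ⟨x'', hx'x'', hx''x⟩ := hCu.exists_cuWayBelow_between hx'x
  have hy' : ∀ j, ∃ y' : S, CuWayBelow y' (y j) ∧ ∃ k : ℕ, 1 ≤ k ∧ (k + 1) • x'' ≤ k • y' := by
    intro j
    obtain ⟨k, hk, hkx⟩ := hy j
    obtain ⟨y', hy'y, hle⟩ :=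
      hCu.exists_cuWayBelow_le_nsmul ((hCu.nsmul_cuWayBelow_nsmul hx''x (k + 1)).trans_le hkx)
    exact ⟨y', hy'y, k, hk, hle⟩
  choose y' hy'y hy'x using hy'
  obtain ⟨n, hn⟩ := h x' x'' y' hx'x'' hy'x fun j => (hy'y j).trans_le (htop _)
  exact ⟨n, hn.trans (Finset.sum_le_sum fun j _ => (hy'y j).le)⟩
end

section
/- Let S be a simple Cu-semigroup with β-comparison. Then S is either stably finite or purely infinite (S = {0, ∞}). That is, if there exists x ≪ ∞ that is infinite, then every nonzero element of S equals ∞. -/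
open scoped ENNReal

/-!
If `a ≪ ∞` absorbs some `b ≠ 0`, then `a` dominates every multiple of `b`, hence by simplicity
every element way below `∞`, so `a = ∞` and `∞` is compact. Then `∞ ≤ n • z` for every `z ≠ 0`,
so `k • ∞ ≤ n • z` for all `k`, which forces `β(∞, z) = 0`, and β-comparison gives `∞ ≤ z`.
-/

open Filter

lemma CuWayBelow.mono_right {S : Type*} [Preorder S] {a b b' : S}
    (h : CuWayBelow a b) (hb : b ≤ b') : CuWayBelow a b' :=
  fun c hc s hs hb's => h c hc s hs (hb.trans hb's)

lemma nsmul_le_of_add_le_self {M : Type*} [AddCommMonoid M] [Preorder M] [IsOrderedAddMonoid M]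
    {a b : M} (ha : 0 ≤ a) (h : a + b ≤ a) (n : ℕ) : n • b ≤ a := by
  have hadd : a + n • b ≤ a := by
    induction n with
    | zero => simp
    | succ n ih =>
      calc a + (n + 1) • b = (a + n • b) + b := by rw [succ_nsmul, add_assoc]
        _ ≤ a + b := add_le_add_left ih b
        _ ≤ a := h
  calc n • b = 0 + n • b := (zero_add _).symm
    _ ≤ a + n • b := add_le_add_left ha _
    _ ≤ a := hadd

lemma beta_nonneg {W : Type*} [AddCommMonoid W] [PartialOrder W] [IsOrderedAddMonoid W]
    (x y : W) : 0 ≤ beta x y :=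
  Real.sInf_nonneg <| by rintro r ⟨k, l, -, -, rfl⟩; positivity

lemma beta_eq_zero_of_forall_nsmul_le {W : Type*} [AddCommMonoid W] [PartialOrder W]
    [IsOrderedAddMonoid W] {x y : W} (n : ℕ) (h : ∀ k : ℕ, k • x ≤ n • y) : beta x y = 0 := by
  have hle : ∀ k : ℕ, 0 < k → beta x y ≤ (n : ℝ) / k := fun k hk =>
    csInf_le ⟨0, by rintro r ⟨k, l, -, -, rfl⟩; positivity⟩ ⟨k, n, hk, h k, rfl⟩
  refine le_antisymm ?_ (beta_nonneg x y)
  exact ge_of_tendsto (tendsto_const_div_atTop_nhds_zero_nat (n : ℝ))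
    (eventually_atTop.2 ⟨1, fun k hk => hle k hk⟩)

namespace CuSemigroup

variable {S : Type*} [AddCommMonoid S] [PartialOrder S] [IsOrderedAddMonoid S]

lemma le_of_forall_wayBelow_le (hCu : CuSemigroup S) {x y : S}
    (h : ∀ x', CuWayBelow x' x → x' ≤ y) : x ≤ y := by
  obtain ⟨c, hc, hlub⟩ := hCu.O2 x
  exact hlub.2 <| by
    rintro _ ⟨n, rfl⟩
    exact h _ ((hc n).mono_right (hlub.1 ⟨n + 1, rfl⟩))

lemma eq_top_of_add_le_self (hCu : CuSemigroup S) (hsimple : CuSimple S) {infty : S}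
    (htop : ∀ s : S, s ≤ infty) (hne : infty ≠ 0) {a b : S} (hab : a + b ≤ a) (hb : b ≠ 0) :
    a = infty := by
  refine le_antisymm (htop a) (hCu.le_of_forall_wayBelow_le fun x' hx' => ?_)
  obtain ⟨m, hm⟩ := hsimple b infty hb hne x' hx'
  exact hm.trans (nsmul_le_of_add_le_self (hCu.pos a) hab m)

end CuSemigroup

lemma CuSimple.eq_top_of_wayBelow_self {S : Type*} [AddCommMonoid S] [PartialOrder S]
    [IsOrderedAddMonoid S] (hsimple : CuSimple S) (hβ : BetaComparison S) {infty : S}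
    (htop : ∀ s : S, s ≤ infty) (hne : infty ≠ 0) (hcompact : CuWayBelow infty infty)
    {z : S} (hz : z ≠ 0) : z = infty := by
  obtain ⟨n, hn⟩ := hsimple z infty hz hne infty hcompact
  have hβ0 : beta infty z = 0 := beta_eq_zero_of_forall_nsmul_le n fun k => (htop _).trans hn
  exact le_antisymm (htop z) (hβ infty z ⟨n, hn⟩ hβ0)

/-- A simple Cu-semigroup with β-comparison is stably finite or purely infinite:
if some `x ≪ ∞` is infinite, then every nonzero element equals `∞`. -/
theorem stmt16 {S : Type*} [AddCommMonoid S] [PartialOrder S] [IsOrderedAddMonoid S] (hCu : CuSemigroup S)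
    (hsimple : CuSimple S) (infty : S) (htop : ∀ s : S, s ≤ infty)
    (hβ : BetaComparison S) :
    (∀ a : S, CuWayBelow a infty → ∀ b : S, a + b ≤ a → b = 0) ∨
      (∀ a : S, a = 0 ∨ a = infty) := by
  by_cases hne : infty = 0
  · exact Or.inr fun a => Or.inl (le_antisymm (hne ▸ htop a) (hCu.pos a))
  refine or_iff_not_imp_left.2 fun hinfinite z => ?_
  push Not at hinfinite
  obtain ⟨a, ha, b, hab, hb⟩ := hinfinite
  have hcompact : CuWayBelow infty infty :=
    hCu.eq_top_of_add_le_self hsimple htop hne hab hb ▸ ha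
  by_cases hz : z = 0
  · exact Or.inl hz
  · exact Or.inr (hsimple.eq_top_of_wayBelow_self hβ htop hne hcompact hz)
end
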